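/- (Pair of frequencies, degree 1 case) Let p ≠ q be primes, let α_1, α_2 ∈ ℝ, and let ε, ε' > 0 with ε + ε' ≤ 1. Suppose ‖p α_1 − q α_2‖ ≤ ε + ε', where ‖x‖ denotes the distance from x to the nearest integer. Then there exists α ∈ ℝ such that ‖p α − α_2‖ ≤ 2 ε'/q and ‖q α − α_1‖ ≤ 2 ε/p. -/

import Mathlib

/-!
By Bézout, shifting `α₁` and `α₂` by suitable integers turns `p α₁ - q α₂` into its signed
distance `δ` to the nearest integer. For the shifted values the points `β₁ = α₂ / p` and
`β₂ = α₁ / q` satisfy `p β₁ = α₂` and `q β₂ = α₁` exactly, and the weighted average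
`α = (ε β₁ + ε' β₂) / (ε + ε')` splits the error `δ` between the two conditions in the ratio
`ε' : ε`, giving `|p α - α₂| ≤ ε' / q` and `|q α - α₁| ≤ ε / p`.
-/

/-- `nint x` is the distance from `x` to the nearest integer. -/
noncomputable def nint (x : ℝ) : ℝ := |x - round x|

lemma nint_le_abs_sub_int (x : ℝ) (z : ℤ) : nint x ≤ |x - z| := round_le x z

lemma IsCoprime.exists_abs_mul_add_sub_mul_add_eq_nint {p q : ℤ} (hpq : IsCoprime p q)
    (x y : ℝ) : ∃ k l : ℤ, |p * (x + l) - q * (y + k)| = nint (p * x - q * y) := by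
  obtain ⟨u, v, huv⟩ := hpq
  set n := round ((p : ℝ) * x - q * y)
  refine ⟨v * n, -(u * n), ?_⟩
  have hn : (q : ℝ) * (v * n : ℤ) - p * (-(u * n) : ℤ) = n := by
    exact_mod_cast (by linear_combination n * huv : q * (v * n) - p * (-(u * n)) = n)
  rw [nint, ← hn]
  ring_nf

lemma exists_abs_mul_sub_le_of_abs_mul_sub_mul_le {p q w w' x y : ℝ} (hp : 0 < p) (hq : 0 < q)
    (hw : 0 ≤ w) (hw' : 0 ≤ w') (hww' : 0 < w + w') (h : |p * x - q * y| ≤ w + w') :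
    ∃ α : ℝ, |p * α - y| ≤ w' / q ∧ |q * α - x| ≤ w / p := by
  set δ := p * x - q * y
  have hδ : |δ| / (w + w') ≤ 1 := (div_le_one hww').mpr h
  refine ⟨(w * (y / p) + w' * (x / q)) / (w + w'), ?_, ?_⟩
  · have e : p * ((w * (y / p) + w' * (x / q)) / (w + w')) - y = w' / q * (δ / (w + w')) := by
      field_simp
      ring
    rw [e, abs_mul, abs_of_nonneg (by positivity), abs_div, abs_of_pos hww']
    exact mul_le_of_le_one_right (by positivity) hδ
  · have e : q * ((w * (y / p) + w' * (x / q)) / (w + w')) - x = -(w / p * (δ / (w + w'))) := by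
      field_simp
      ring
    rw [e, abs_neg, abs_mul, abs_of_nonneg (by positivity), abs_div, abs_of_pos hww']
    exact mul_le_of_le_one_right (by positivity) hδ

theorem pair_of_frequencies_general (p q : ℕ) (hp : p.Prime) (hq : q.Prime) (hpq : p ≠ q)
    (α₁ α₂ : ℝ) (ε ε' : ℝ) (hε : 0 < ε) (hε' : 0 < ε')
    (h : nint ((p : ℝ) * α₁ - (q : ℝ) * α₂) ≤ ε + ε') :
    ∃ α : ℝ, nint ((p : ℝ) * α - α₂) ≤ 2 * ε' / q ∧ nint ((q : ℝ) * α - α₁) ≤ 2 * ε / p := by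
  have hcop : IsCoprime (p : ℤ) q :=
    Nat.isCoprime_iff_coprime.mpr ((Nat.coprime_primes hp hq).mpr hpq)
  obtain ⟨k, l, hkl⟩ := hcop.exists_abs_mul_add_sub_mul_add_eq_nint α₁ α₂
  push_cast at hkl
  have hp0 : (0 : ℝ) < p := by exact_mod_cast hp.pos
  have hq0 : (0 : ℝ) < q := by exact_mod_cast hq.pos
  obtain ⟨α, h₂, h₁⟩ := exists_abs_mul_sub_le_of_abs_mul_sub_mul_le hp0 hq0 hε.le hε'.le
    (by positivity) (hkl.trans_le h)
  refine ⟨α, ?_, ?_⟩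
  · calc nint (p * α - α₂) ≤ |p * α - α₂ - k| := nint_le_abs_sub_int _ k
      _ ≤ ε' / q := by rwa [sub_sub]
      _ ≤ 2 * ε' / q := by gcongr; linarith
  · calc nint (q * α - α₁) ≤ |q * α - α₁ - l| := nint_le_abs_sub_int _ l
      _ ≤ ε / p := by rwa [sub_sub]
      _ ≤ 2 * ε / p := by gcongr; linarith

theorem pair_of_frequencies (p q : ℕ) (hp : p.Prime) (hq : q.Prime) (hpq : p ≠ q)
    (α₁ α₂ : ℝ) (ε ε' : ℝ) (hε : 0 < ε) (hε' : 0 < ε') (hsum : ε + ε' ≤ 1)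
    (h : nint ((p : ℝ) * α₁ - (q : ℝ) * α₂) ≤ ε + ε') :
    ∃ α : ℝ, nint ((p : ℝ) * α - α₂) ≤ 2 * ε' / q ∧ nint ((q : ℝ) * α - α₁) ≤ 2 * ε / p :=
  pair_of_frequencies_general p q hp hq hpq α₁ α₂ ε ε' hε hε' h
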